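/- arXiv:2405.07592 — 2 statements merged into one kernel-verified Lean document; each statement's English description precedes it below -/
import Mathlib

section
/- Let ρ = ∑_i p_i |s_i⟩⟨s_i| be a spectral decomposition of a density matrix with orthonormal eigenvectors |s_i⟩ and eigenvalues p_i ≥ 0 summing to 1, with Tr(ρ²) > 0. Let |ρ⟩ = (1/√(∑_i p_i²)) ∑_i p_i |s_i⟩⊗|s_i⟩ and |ψ_ρ⟩ = ∑_i √p_i |s_i⟩⊗|s_i⟩. Then for every α > 0, α ≠ 1, the order-α entanglement Rényi entropy satisfies H_α(|ρ⟩) ≤ H_α(|ψ_ρ⟩). -/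
/-!
The function `f t = log ∑ i, p i ^ t` is convex (Hölder's inequality) and vanishes at `t = 1`.
In terms of `f`, the purification has `H_α = f α / (1 - α)` and the vectorization has
`H_α = (f (2α) - α f 2) / (1 - α)`. For `α < 1` the points `α < 2α < 2` and `α < 1 < 2`, and for
`α > 1` the points `1 < 2 < 2α` and `1 < α < 2α`, give two three-point convexity inequalities
whose combination is the claim.
-/

open Real Finset Set

section Moments

variable {ι : Type*} {s : Finset ι} {p : ι → ℝ}

theorem sum_rpow_add_le_rpow_mul_rpow (hp : ∀ i ∈ s, 0 ≤ p i) {x y a b : ℝ}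
    (hx : 0 ≤ x) (hy : 0 ≤ y) (ha : 0 < a) (hb : 0 < b) (hab : a + b = 1) :
    ∑ i ∈ s, p i ^ (a * x + b * y) ≤ (∑ i ∈ s, p i ^ x) ^ a * (∑ i ∈ s, p i ^ y) ^ b := by
  have holder := inner_le_Lp_mul_Lq_of_nonneg s (holderConjugate_one_div ha hb hab)
    (f := fun i => p i ^ (a * x)) (g := fun i => p i ^ (b * y))
    (fun i hi => rpow_nonneg (hp i hi) _) (fun i hi => rpow_nonneg (hp i hi) _)
  have hpow {c : ℝ} (hc : 0 < c) (z : ℝ) {i} (hi : i ∈ s) :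
      (p i ^ (c * z)) ^ (1 / c) = p i ^ z := by
    rw [← rpow_mul (hp i hi), mul_one_div, mul_div_cancel_left₀ _ hc.ne']
  simp only [one_div_one_div] at holder
  rwa [sum_congr rfl fun i hi => hpow ha x hi, sum_congr rfl fun i hi => hpow hb y hi,
    ← sum_congr rfl fun i hi => rpow_add_of_nonneg (hp i hi) (by positivity) (by positivity)]
    at holder

theorem convexOn_log_sum_rpow (hp : ∀ i ∈ s, 0 ≤ p i) (hp₀ : ∃ i ∈ s, 0 < p i) :
    ConvexOn ℝ (Ici 0) fun t : ℝ => log (∑ i ∈ s, p i ^ t) := by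
  obtain ⟨i₀, hi₀, hpi₀⟩ := hp₀
  have hsum_pos (t : ℝ) : 0 < ∑ i ∈ s, p i ^ t :=
    sum_pos' (fun i hi => rpow_nonneg (hp i hi) t) ⟨i₀, hi₀, rpow_pos_of_pos hpi₀ t⟩
  refine convexOn_iff_forall_pos.mpr ⟨convex_Ici 0, fun x hx y hy a b ha hb hab => ?_⟩
  calc log (∑ i ∈ s, p i ^ (a • x + b • y))
      ≤ log ((∑ i ∈ s, p i ^ x) ^ a * (∑ i ∈ s, p i ^ y) ^ b) :=
        log_le_log (hsum_pos _) (sum_rpow_add_le_rpow_mul_rpow hp hx hy ha hb hab)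
    _ = a • log (∑ i ∈ s, p i ^ x) + b • log (∑ i ∈ s, p i ^ y) := by
        rw [log_mul (rpow_pos_of_pos (hsum_pos x) a).ne' (rpow_pos_of_pos (hsum_pos y) b).ne',
          log_rpow (hsum_pos x), log_rpow (hsum_pos y), smul_eq_mul, smul_eq_mul]

end Moments

section ThreePoint

variable {f : ℝ → ℝ} {α : ℝ}

theorem ConvexOn.apply_two_mul_le_of_lt_one (hf : ConvexOn ℝ (Ici 0) f) (h1 : f 1 = 0)
    (hα : 0 < α) (hα1 : α < 1) : f (2 * α) ≤ α * f 2 + f α := by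
  have hmem (t : ℝ) (ht : 0 < t) : t ∈ Ici (0 : ℝ) := ht.le
  have at_2α := hf.secant_mono_aux1 (y := 2 * α) (hmem α hα) (hmem 2 two_pos) (by linarith)
    (by linarith)
  have at_1 := hf.secant_mono_aux1 (hmem α hα) (hmem 2 two_pos) hα1 one_lt_two
  rw [h1] at at_1
  refine le_of_mul_le_mul_left ?_ (by linarith : (0 : ℝ) < 2 - α)
  linarith [mul_le_mul_of_nonneg_left at_1 hα.le]

theorem ConvexOn.le_apply_two_mul_of_one_lt (hf : ConvexOn ℝ (Ici 0) f) (h1 : f 1 = 0)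
    (hα1 : 1 < α) : α * f 2 + f α ≤ f (2 * α) := by
  have hmem (t : ℝ) (ht : 0 < t) : t ∈ Ici (0 : ℝ) := ht.le
  have at_2 := hf.secant_mono_aux1 (hmem 1 one_pos) (hmem (2 * α) (by linarith)) one_lt_two
    (by linarith)
  have at_α := hf.secant_mono_aux1 (hmem 1 one_pos) (hmem (2 * α) (by linarith)) hα1
    (by linarith)
  rw [h1] at at_2 at_α
  refine le_of_mul_le_mul_left ?_ (by linarith : (0 : ℝ) < 2 * α - 1)
  linarith [mul_le_mul_of_nonneg_left at_2 (by linarith : (0 : ℝ) ≤ α)]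

theorem ConvexOn.sub_mul_div_one_sub_le (hf : ConvexOn ℝ (Ici 0) f) (h1 : f 1 = 0)
    (hα : 0 < α) (hα1 : α ≠ 1) : (f (2 * α) - α * f 2) / (1 - α) ≤ f α / (1 - α) := by
  rcases hα1.lt_or_gt with hlt | hgt
  · exact div_le_div_of_nonneg_right (by linarith [hf.apply_two_mul_le_of_lt_one h1 hα hlt])
      (by linarith)
  · exact div_le_div_of_nonpos_of_le (by linarith)
      (by linarith [hf.le_apply_two_mul_of_one_lt h1 hgt])

end ThreePoint

theorem log_sum_rpow_sq_div_sum_sq {ι : Type*} [Fintype ι] {p : ι → ℝ} (hp : ∀ i, 0 ≤ p i)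
    (hp₀ : ∃ i, 0 < p i) (α : ℝ) :
    log (∑ i, (p i ^ 2 / ∑ j, p j ^ 2) ^ α) =
      log (∑ i, p i ^ (2 * α)) - α * log (∑ i, p i ^ (2 : ℝ)) := by
  obtain ⟨i₀, hpi₀⟩ := hp₀
  have hsq_pos : 0 < ∑ i, p i ^ (2 : ℝ) :=
    sum_pos' (fun i _ => rpow_nonneg (hp i) _) ⟨i₀, mem_univ _, rpow_pos_of_pos hpi₀ _⟩
  have hpow_pos : 0 < ∑ i, p i ^ (2 * α) :=
    sum_pos' (fun i _ => rpow_nonneg (hp i) _) ⟨i₀, mem_univ _, rpow_pos_of_pos hpi₀ _⟩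
  simp_rw [← rpow_two, div_rpow (rpow_nonneg (hp _) _) hsq_pos.le, ← rpow_mul (hp _), ← sum_div]
  rw [log_div hpow_pos.ne' (rpow_pos_of_pos hsq_pos α).ne', log_rpow hsq_pos]

theorem renyi_entropy_vectorization_le_purification_general {ι : Type*} [Fintype ι]
    (p : ι → ℝ) (hp : ∀ i, 0 ≤ p i) (hsum : ∑ i, p i = 1)
    (α : ℝ) (hα : 0 < α) (hα1 : α ≠ 1) :
    (1 / (1 - α)) * Real.logb 2 (∑ i, (p i ^ 2 / ∑ j, p j ^ 2) ^ α) ≤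
      (1 / (1 - α)) * Real.logb 2 (∑ i, (p i) ^ α) := by
  obtain ⟨i₀, -, hpi₀⟩ := exists_lt_of_sum_lt (by simp [hsum] : ∑ _ : ι, (0 : ℝ) < ∑ i, p i)
  have hconvex := convexOn_log_sum_rpow (s := univ) (fun i _ => hp i) ⟨i₀, mem_univ _, hpi₀⟩
  have hlog_one : log (∑ i, p i ^ (1 : ℝ)) = 0 := by simp [hsum]
  have key := hconvex.sub_mul_div_one_sub_le hlog_one hα hα1
  have key_div := div_le_div_of_nonneg_right key (log_pos one_lt_two).le
  rw [logb, logb, log_sum_rpow_sq_div_sum_sq hp ⟨i₀, hpi₀⟩]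
  calc _ = _ := by ring
    _ ≤ _ := key_div
    _ = _ := by ring

/-- Let ρ have spectral probabilities `p i ≥ 0` summing to 1 with
`∑ p i² > 0`.  The vectorized state `|ρ⟩` has Schmidt probabilities
`p i² / ∑ p j²` while the purification `|ψ_ρ⟩` has Schmidt probabilities
`p i`.  For every `α > 0`, `α ≠ 1`, the order-α entanglement Rényi entropy
satisfies `H_α(|ρ⟩) ≤ H_α(|ψ_ρ⟩)`. -/
theorem renyi_entropy_vectorization_le_purification {ι : Type*} [Fintype ι]
    (p : ι → ℝ) (hp : ∀ i, 0 ≤ p i) (hsum : ∑ i, p i = 1)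
    (hsq : 0 < ∑ i, (p i) ^ 2)
    (α : ℝ) (hα : 0 < α) (hα1 : α ≠ 1) :
    (1 / (1 - α)) * Real.logb 2 (∑ i, (p i ^ 2 / ∑ j, p j ^ 2) ^ α) ≤
      (1 / (1 - α)) * Real.logb 2 (∑ i, (p i) ^ α) :=
  renyi_entropy_vectorization_le_purification_general p hp hsum α hα hα1
end

section
/- Let |Ψ⟩ be a bipartite pure state on H_A ⊗ H_B with Schmidt decomposition |Ψ⟩ = ∑_{i=1}^{χ} λ_i |φ_i⟩|ψ_i⟩ (λ_i > 0, {|φ_i⟩} and {|ψ_i⟩} orthonormal, dim H_A = dim H_B = d). Then there exist four positive semi-definite Hermitian matrices ρ₁,...,ρ₄ on H_A, each of rank at most χ, and complex coefficients c₁,...,c₄, such that |Ψ⟩ = ∑_{k=1}^{4} c_k vec(ρ_k), where vec(ρ) = ∑_{ij} ρ_{ij}|i⟩⊗|j⟩. -/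
open scoped ComplexOrder
open Matrix

/- Writing `Ψ = A Bᴴ` with the columns of `A` the vectors `λ_i φ_i` and those of `B` the
vectors `ψ_i*`, the polarization identity expresses `A Bᴴ` through the four Gram matrices
`(A + iᵏ B)(A + iᵏ B)ᴴ`, which are positive semidefinite and of rank at most the number `χ` of
columns. -/

theorem Matrix.mul_conjTranspose_polarization {m n : Type*} [Fintype n] (A B : Matrix m n ℂ) :
    A * Bᴴ = ∑ k : Fin 4, (Complex.I ^ (k : ℕ) / 4) •
      ((A + Complex.I ^ (k : ℕ) • B) * (A + Complex.I ^ (k : ℕ) • B)ᴴ) := by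
  have expand (c : ℂ) : (A + c • B) * (A + c • B)ᴴ
      = A * Aᴴ + star c • (A * Bᴴ) + c • (B * Aᴴ) + (c * star c) • (B * Bᴴ) := by
    simp only [conjTranspose_add, conjTranspose_smul, Matrix.add_mul, Matrix.mul_add,
      Matrix.smul_mul, Matrix.mul_smul]
    module
  -- the cross terms `A Aᴴ`, `B Aᴴ`, `B Bᴴ` cancel since `∑ₖ iᵏ = ∑ₖ i²ᵏ = 0`
  simp only [expand, Fin.sum_univ_four]
  norm_num [pow_succ, Complex.I_sq]
  match_scalars <;> ring_nf <;> simp only [Complex.I_sq] <;> ring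

theorem Matrix.rank_mul_conjTranspose_le_width {R : Type*} [Field R] [PartialOrder R] [StarRing R]
    [StarOrderedRing R] {m n : ℕ} (C : Matrix (Fin m) (Fin n) R) :
    (C * Cᴴ).rank ≤ n := by
  rw [rank_self_mul_conjTranspose]
  exact rank_le_width C

theorem schmidt_state_eq_four_psd_vectorizations_general {d χ : ℕ}
    (lam : Fin χ → ℝ)
    (φ ψ : Fin χ → (Fin d → ℂ))
    (Ψ : Fin d × Fin d → ℂ)
    (hΨ : ∀ p, Ψ p = ∑ i, (lam i : ℂ) * φ i p.1 * ψ i p.2) :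
    ∃ (ρ : Fin 4 → Matrix (Fin d) (Fin d) ℂ) (c : Fin 4 → ℂ),
      (∀ k, (ρ k).PosSemidef ∧ (ρ k).rank ≤ χ) ∧
      ∀ p : Fin d × Fin d, Ψ p = ∑ k, c k * (ρ k) p.1 p.2 := by
  let A : Matrix (Fin d) (Fin χ) ℂ := of fun x i => (lam i : ℂ) * φ i x
  let B : Matrix (Fin d) (Fin χ) ℂ := of fun x i => star (ψ i x)
  let C (k : Fin 4) : Matrix (Fin d) (Fin χ) ℂ := A + Complex.I ^ (k : ℕ) • B
  have hΨ_eq (p : Fin d × Fin d) : Ψ p = (A * Bᴴ) p.1 p.2 := by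
    simp [hΨ, A, B, mul_apply]
  refine ⟨fun k => C k * (C k)ᴴ, fun k => Complex.I ^ (k : ℕ) / 4,
    fun k => ⟨posSemidef_self_mul_conjTranspose _, rank_mul_conjTranspose_le_width _⟩,
    fun p => ?_⟩
  rw [hΨ_eq, mul_conjTranspose_polarization]
  simp only [Matrix.sum_apply, Matrix.smul_apply, smul_eq_mul, C]

/-- Let `|Ψ⟩ = ∑_{i<χ} λ_i |φ_i⟩|ψ_i⟩` be a Schmidt decomposition of a
bipartite pure state (λ_i > 0, both families orthonormal).  Then there exist
four positive semi-definite Hermitian matrices ρ₁,…,ρ₄, each of rank at most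
χ, and complex coefficients c₁,…,c₄, such that
`|Ψ⟩ = ∑_k c_k vec(ρ_k)` where `vec(ρ) = ∑_{ij} ρ_{ij} |i⟩⊗|j⟩`. -/
theorem schmidt_state_eq_four_psd_vectorizations {d χ : ℕ}
    (lam : Fin χ → ℝ) (hlam : ∀ i, 0 < lam i)
    (φ ψ : Fin χ → (Fin d → ℂ))
    (hφ : ∀ i j, (∑ x, star (φ i x) * φ j x) = if i = j then 1 else 0)
    (hψ : ∀ i j, (∑ x, star (ψ i x) * ψ j x) = if i = j then 1 else 0)
    (Ψ : Fin d × Fin d → ℂ)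
    (hΨ : ∀ p, Ψ p = ∑ i, (lam i : ℂ) * φ i p.1 * ψ i p.2) :
    ∃ (ρ : Fin 4 → Matrix (Fin d) (Fin d) ℂ) (c : Fin 4 → ℂ),
      (∀ k, (ρ k).PosSemidef ∧ (ρ k).rank ≤ χ) ∧
      ∀ p : Fin d × Fin d, Ψ p = ∑ k, c k * (ρ k) p.1 p.2 :=
  schmidt_state_eq_four_psd_vectorizations_general lam φ ψ Ψ hΨ
end
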